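/- Ccbs does not satisfy Self-Contradiction: in the argumentation framework with arguments {a, b} and single attack (a,a), the non-self-attacking argument b is not strictly more acceptable than the self-attacking argument a under Ccbs. -/
import Mathlib


/-- A possible world: a truth assignment over the atoms/arguments. -/
abbrev World (A : Type) := A → Bool

/-- A conditional (φ|ψ): first component is the antecedent ψ, second the consequent φ,
both given semantically as Boolean functions on worlds. -/
abbrev Cond (A : Type) := (World A → Bool) × (World A → Bool)

/-- `w` falsifies (φ|ψ) iff w ⊨ ψ ∧ ¬φ. -/
def falsifies {A : Type} (w : World A) (c : Cond A) : Prop :=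
  c.1 w = true ∧ c.2 w = false

/-- `w` verifies (φ|ψ) iff w ⊨ ψ ∧ φ. -/
def verifies {A : Type} (w : World A) (c : Cond A) : Prop :=
  c.1 w = true ∧ c.2 w = true

instance {A : Type} (w : World A) (c : Cond A) : Decidable (falsifies w c) := by
  unfold falsifies; infer_instance

instance {A : Type} (w : World A) (c : Cond A) : Decidable (verifies w c) := by
  unfold verifies; infer_instance

/-- Δ tolerates δ iff some world verifies δ and falsifies no member of Δ. -/
def tolerates {A : Type} [Fintype A] [DecidableEq A]
    (Δ : Finset (Cond A)) (c : Cond A) : Prop :=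
  ∃ w : World A, verifies w c ∧ ∀ d ∈ Δ, ¬ falsifies w d

instance {A : Type} [Fintype A] [DecidableEq A] (Δ : Finset (Cond A)) (c : Cond A) :
    Decidable (tolerates Δ c) := by
  unfold tolerates
  have : DecidablePred (fun w : World A => verifies w c ∧ ∀ d ∈ Δ, ¬ falsifies w d) :=
    fun _ => inferInstance
  infer_instance

/-- The Z-level of a conditional: Z(δ) = i iff δ ∈ Δ_i in the Z-partition,
where Δ_0 is the set of conditionals tolerated by Δ and the recursion continues on Δ \ Δ_0. -/
def zlevel {A : Type} [Fintype A] [DecidableEq A]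
    (Δ : Finset (Cond A)) (c : Cond A) : ℕ :=
  if tolerates Δ c then 0
  else
    if h : (Δ.filter (fun d => ¬ tolerates Δ d)).card < Δ.card then
      1 + zlevel (Δ.filter (fun d => ¬ tolerates Δ d)) c
    else 0
termination_by Δ.card
decreasing_by exact h

/-- The System Z ranking function: κ^Z(w) = max{Z(δ) : δ ∈ Δ falsified by w} + 1,
with max ∅ = -1 (so κ^Z(w) = 0 iff w falsifies no conditional of Δ). -/
def kappaZ {A : Type} [Fintype A] [DecidableEq A]
    (Δ : Finset (Cond A)) (w : World A) : ℕ :=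
  (Δ.filter (fun d => falsifies w d)).sup (fun d => zlevel Δ d + 1)

/-- The translation θ of an argumentation framework with attack relation `att`
into conditionals: for each argument a, the conditional (a | ⋀_{(b,a)∈R} ¬b). -/
def theta {A : Type} [Fintype A] [DecidableEq A] (att : A → A → Bool) : Finset (Cond A) :=
  Finset.univ.image (fun a : A =>
    ((fun w : World A => decide (∀ b, att b a = true → w b = false)),
     (fun w : World A => w a)))

/-- Ccs(a): the number of System-Z-rank-0 worlds satisfying a. -/
def Ccs {A : Type} [Fintype A] [DecidableEq A]
    (Δ : Finset (Cond A)) (a : A) : ℕ :=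
  (Finset.univ.filter (fun w : World A => kappaZ Δ w = 0 ∧ w a = true)).card

/-- The AF with arguments {a,b} (a = 0, b = 1) and single attack (a,a). -/
def attSC : Fin 2 → Fin 2 → Bool := fun x y => decide (x = 0 ∧ y = 0)

lemma kz_zero_w0 {w : World (Fin 2)} (h : kappaZ (theta attSC) w = 0) : w 0 = true := by
  by_contra hc
  have hw0 : w 0 = false := by simpa using hc
  have hmem : ∃ c ∈ theta attSC, falsifies w c := by
    refine ⟨_, Finset.mem_image_of_mem _ (Finset.mem_univ (0 : Fin 2)), ?_⟩
    refine ⟨?_, hw0⟩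
    simp only [decide_eq_true_eq]
    intro b hb
    have : b = 0 ∧ (0 : Fin 2) = 0 := of_decide_eq_true hb
    rw [this.1]; exact hw0
  obtain ⟨c, hc, hf⟩ := hmem
  have hle := Finset.le_sup (f := fun d => zlevel (theta attSC) d + 1)
    (Finset.mem_filter.mpr ⟨hc, hf⟩)
  have : kappaZ (theta attSC) w ≥ 1 := le_trans (Nat.succ_le_succ (Nat.zero_le _)) hle
  omega

/-- Ccbs does not satisfy Self-Contradiction: the non-self-attacking b
is not strictly more acceptable than the self-attacking a. -/
theorem ccbs_not_self_contradiction :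
    ¬ (Ccs (theta attSC) 1 > Ccs (theta attSC) 0) := by
  have hle : Ccs (theta attSC) 1 ≤ Ccs (theta attSC) 0 := by
    apply Finset.card_le_card
    intro w hw
    rw [Finset.mem_filter] at hw ⊢
    exact ⟨hw.1, hw.2.1, kz_zero_w0 hw.2.1⟩
  omega
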